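/- If a term u matches the renamed (linear) version of t via substitution σ and u is consistent with respect to the consistency partition of t, then the substitution ρ defined by ρ(x) = u[p] for any position p with t[p] = x is well-defined on vars(t) and satisfies t^ρ = u. -/

import Mathlib

/-! At a variable position `p` of `t`, the linear term `rename1 t []` carries the variable `p`,
so `u[p] = σ p`. Consistency of `u` makes `σ p` depend only on the variable `t[p]`, which
defines `ρ`; then `t^ρ` and `(rename1 t [])^σ` agree at every variable position, so they
are equal. -/

inductive Term (V F : Type) : Type where
  | var : V → Term V F
  | app : F → List (Term V F) → Term V F

namespace Term

variable {V W U F : Type}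

/-- Equality modulo variables. -/
inductive EqMod : Term V F → Term W F → Prop
  | var (x : V) (y : W) : EqMod (var x) (var y)
  | app (f : F) {ts : List (Term V F)} {us : List (Term W F)}
      (hlen : ts.length = us.length)
      (h : ∀ tu ∈ List.zip ts us, EqMod tu.1 tu.2) :
      EqMod (app f ts) (app f us)

/-- Subterm at a position (0-based). -/
def subterm : List ℕ → Term V F → Option (Term V F)
  | [], t => some t
  | _ :: _, var _ => none
  | i :: p, app _ ts => (ts[i]?).bind (subterm p)

/-- Homomorphic application of a substitution. -/
def subst (σ : V → Term W F) : Term V F → Term W F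
  | var x => σ x
  | app f ts => app f (ts.attach.map fun t => subst σ t.1)
termination_by t => sizeOf t
decreasing_by simp only [Term.app.sizeOf_spec]; have := List.sizeOf_lt_of_mem t.2; omega

/-- Number of occurrences of a variable. -/
def countVar [DecidableEq V] (x : V) : Term V F → ℕ
  | var y => if y = x then 1 else 0
  | app _ ts => (ts.attach.map fun t => countVar x t.1).sum
termination_by t => sizeOf t
decreasing_by simp only [Term.app.sizeOf_spec]; have := List.sizeOf_lt_of_mem t.2; omega

/-- A term is linear if every variable occurs at most once. -/
def Linear [DecidableEq V] (t : Term V F) : Prop := ∀ x, countVar x t ≤ 1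

/-- Well-formed with respect to a ranked alphabet. -/
inductive WF (ar : F → ℕ) : Term V F → Prop
  | var (x : V) : WF ar (var x)
  | app (f : F) {ts : List (Term V F)} (hlen : ts.length = ar f)
      (h : ∀ t ∈ ts, WF ar t) : WF ar (app f ts)

/-- Ground terms contain no variables. -/
inductive Ground : Term V F → Prop
  | app (f : F) {ts : List (Term V F)} (h : ∀ t ∈ ts, Ground t) : Ground (app f ts)

/-- Renaming: replace the variable at position p by the position variable p. -/
def rename1 : Term V F → List ℕ → Term (List ℕ) F
  | var _, p => var p
  | app f ts, p => app f (ts.attach.mapIdx fun i t => rename1 t.1 (p ++ [i]))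
termination_by t _ => sizeOf t
decreasing_by simp only [Term.app.sizeOf_spec]; have := List.sizeOf_lt_of_mem t.2; omega


theorem subst_app (σ : V → Term W F) (f : F) (ts : List (Term V F)) :
    subst σ (app f ts) = app f (ts.map (subst σ)) := by
  rw [subst]
  congr 1
  exact List.ext_getElem (by simp) fun i _ _ => by simp

theorem rename1_app (f : F) (ts : List (Term V F)) (q : List ℕ) :
    rename1 (app f ts) q = app f (ts.mapIdx fun i t => rename1 t (q ++ [i])) := by
  rw [rename1]
  congr 1
  exact List.ext_getElem (by simp) fun i _ _ => by simp

theorem subterm_cons_app {i : ℕ} {p : List ℕ} {f : F} {ts : List (Term V F)} {s : Term V F} :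
    subterm (i :: p) (app f ts) = some s ↔ ∃ t, ts[i]? = some t ∧ subterm p t = some s :=
  Option.bind_eq_some_iff

theorem subterm_rename1_of_subterm_eq_var {x : V} :
    ∀ {p : List ℕ} {t : Term V F} (q : List ℕ),
      subterm p t = some (var x) → subterm p (rename1 t q) = some (var (q ++ p))
  | [], var _, q, _ => by simp [rename1, subterm]
  | i :: p, app f ts, q, h => by
    obtain ⟨s, hs, hsub⟩ := subterm_cons_app.mp h
    rw [rename1_app, subterm_cons_app]
    refine ⟨rename1 s (q ++ [i]), by simp [hs], ?_⟩
    simpa using subterm_rename1_of_subterm_eq_var (q ++ [i]) hsub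

theorem subterm_subst_of_subterm_eq_var (σ : V → Term W F) {x : V} :
    ∀ {p : List ℕ} {t : Term V F},
      subterm p t = some (var x) → subterm p (subst σ t) = some (σ x)
  | [], var _, h => by cases h; simp [subterm, subst]
  | i :: p, app f ts, h => by
    obtain ⟨s, hs, hsub⟩ := subterm_cons_app.mp h
    rw [subst_app, subterm_cons_app]
    exact ⟨subst σ s, by simp [hs], subterm_subst_of_subterm_eq_var σ hsub⟩

theorem subst_eq_subst_rename1 {ρ : V → Term W F} {σ : List ℕ → Term W F} :
    ∀ (t : Term V F) (q : List ℕ),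
      (∀ p x, subterm p t = some (var x) → ρ x = σ (q ++ p)) →
      subst ρ t = subst σ (rename1 t q)
  | var x, q, h => by simpa [subst, rename1] using h [] x rfl
  | app f ts, q, h => by
    rw [subst_app, rename1_app, subst_app]
    congr 1
    refine List.ext_getElem (by simp) fun i hi _ => ?_
    have hi' : i < ts.length := by simpa using hi
    simp only [List.getElem_map, List.getElem_mapIdx]
    refine subst_eq_subst_rename1 ts[i] (q ++ [i]) fun p x hp => ?_
    simpa using h (i :: p) x (subterm_cons_app.mpr ⟨ts[i], by simp [hi'], hp⟩)
termination_by t => sizeOf t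
decreasing_by
  simp only [Term.app.sizeOf_spec]
  have := List.sizeOf_lt_of_mem (List.getElem_mem hi')
  omega

theorem subterm_subst_rename1_of_subterm_eq_var (σ : List ℕ → Term W F) {t : Term V F}
    {p : List ℕ} {x : V} (h : subterm p t = some (var x)) :
    subterm p (subst σ (rename1 t [])) = some (σ p) := by
  simpa using subterm_subst_of_subterm_eq_var σ (subterm_rename1_of_subterm_eq_var [] h)

theorem exists_subst_eq_subst_rename1 {t : Term V F} {σ : List ℕ → Term W F}
    (hσ : ∀ p q x, subterm p t = some (var x) → subterm q t = some (var x) → σ p = σ q) :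
    ∃ ρ : V → Term W F, (∀ x p, subterm p t = some (var x) → ρ x = σ p) ∧
      subst ρ t = subst σ (rename1 t []) := by
  let ρ (x : V) : Term W F := σ (Classical.epsilon fun p => subterm p t = some (var x))
  have hρ (x : V) (p : List ℕ) (hp : subterm p t = some (var x)) : ρ x = σ p := by
    have hε := Classical.epsilon_spec (p := fun p => subterm p t = some (var x)) ⟨p, hp⟩
    exact hσ _ p x hε hp
  exact ⟨ρ, hρ, subst_eq_subst_rename1 t [] fun p x hp => by simpa using hρ x p hp⟩

end Term

theorem consistent_match_gives_subst {V F : Type} (t u : Term V F)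
    (σ : List ℕ → Term V F) (hmatch : Term.subst σ (Term.rename1 t []) = u)
    (hcons : ∀ (p q : List ℕ) (x : V), Term.subterm p t = some (Term.var x) →
      Term.subterm q t = some (Term.var x) → Term.subterm p u = Term.subterm q u) :
    ∃ ρ : V → Term V F,
      (∀ (x : V) (p : List ℕ), Term.subterm p t = some (Term.var x) →
        Term.subterm p u = some (ρ x)) ∧ Term.subst ρ t = u := by
  subst hmatch
  have hu (p : List ℕ) {x : V} (hp : Term.subterm p t = some (Term.var x)) :
      Term.subterm p (Term.subst σ (Term.rename1 t [])) = some (σ p) :=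
    Term.subterm_subst_rename1_of_subterm_eq_var σ hp
  obtain ⟨ρ, hρ, hsubst⟩ := Term.exists_subst_eq_subst_rename1
    fun p q x hp hq => Option.some_injective _ (by rw [← hu p hp, ← hu q hq, hcons p q x hp hq])
  exact ⟨ρ, fun x p hp => by rw [hu p hp, hρ x p hp], hsubst⟩
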